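/- Let X be a linear order and let φ_{1+X}0 denote the Veblen term system over 1+X. Then the map sending each element s of the Ackermann-style term system Â(X) (terms χ^{s_k}_{x_k} ∘ ⋯ ∘ χ^{s_0}_{x_0}(1) with x_k < ⋯ < x_0 in X and subterm conditions s_i < χ^{s_{i-1}}_{x_{i-1}} ∘ ⋯ ∘ χ^{s_0}_{x_0}(1)), defined recursively by o(0) = φ_0 0, o(1) = φ_0(φ_0 0), and o(χ^{s_k}_{x_k} ∘ ⋯ ∘ χ^{s_0}_{x_0}(1)) = φ_{x_k}(o(χ^{s_{k-1}}_{x_{k-1}} ∘ ⋯ ∘ χ^{s_0}_{x_0}(1)) + o(s_k)), is a strictly increasing map from Â(X) into φ_{1+X}0. -/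
import Mathlib


attribute [local instance] Classical.propDecidable

/-- Terms of the Ackermann-style system `Â(X)`: `zero` is the number 0, `one` is the
empty composition `1`, and `app x s t` is the composition `t` extended by one more
(innermost) factor `χ^s_x`; thus `χ^{s_k}_{x_k} ∘ ⋯ ∘ χ^{s_0}_{x_0}(1)` is encoded with
the pair `(x_0, s_0)` outermost in the `app`-nesting. -/
inductive AT (X : Type u) : Type u
  | zero : AT X
  | one : AT X
  | app : X → AT X → AT X → AT X

namespace AT

variable {X : Type*}

/-- The order on `Â(X)`: `zero` is minimal, and non-zero terms are compared via the
lexicographic order on their sequences `⟨(x_0,s_0),(x_1,s_1),…⟩` over `X × Â(X)`. -/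
def ALt [LT X] : AT X → AT X → Prop
  | _, zero => False
  | zero, _ => True
  | one, one => False
  | one, app _ _ _ => True
  | app _ _ _, one => False
  | app x s t, app y u v =>
      x < y ∨ (x = y ∧ ALt s u) ∨ (x = y ∧ s = u ∧ ALt t v)

/-- Append one more outermost factor `χ^s_x` to a composition term. -/
def acomp : AT X → X → AT X → AT X
  | one, x, s => app x s one
  | app y u t, x, s => app y u (acomp t x s)
  | zero, _, _ => zero

/-- Wellformedness of a composition term: `AWFaux last acc t` says that the remaining
factors `t` have strictly decreasing indices below `last` and each exponent `s` is a
wellformed term with `s < acc`, where `acc` is the composition of the factors already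
processed (initially the term `1`). -/
def AWFaux [LT X] : Option X → AT X → AT X → Prop
  | _, _, zero => False
  | _, _, one => True
  | last, acc, app x s t =>
      (∀ y, last = some y → x < y) ∧ (s = zero ∨ AWFaux none one s) ∧
        ALt s acc ∧ AWFaux (some x) (acomp acc x s) t

/-- Membership in `Â(X)`. -/
def AWF [LT X] (t : AT X) : Prop := t = zero ∨ AWFaux none one t

end AT

/-- Terms of the Veblen system `φ_{1+X}0`: `zero`, principal terms `phi x s` (with
`x ∈ 1 + X`, represented as `WithBot X`), and sums `add u v` of a principal term `u`
and a further nonzero sum `v` of weakly smaller principal terms. -/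
inductive VT (X : Type u) : Type u
  | zero : VT X
  | phi : WithBot X → VT X → VT X
  | add : VT X → VT X → VT X

namespace VT

variable {X : Type*}

/-- The leading (first) summand of a term. -/
def lead : VT X → VT X
  | add u _ => u
  | t => t

/-- The standard Veblen comparison of terms. -/
def VLt [LinearOrder X] : VT X → VT X → Prop
  | _, zero => False
  | zero, _ => True
  | phi a g, phi b d =>
      (a < b ∧ VLt g (phi b d)) ∨ (a = b ∧ VLt g d) ∨ (b < a ∧ VLt (phi a g) d)
  | phi a g, add u _ => VLt (phi a g) u ∨ phi a g = u
  | add u _, phi b d => VLt u (phi b d)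
  | add u v, add u' v' => VLt u u' ∨ (u = u' ∧ VLt v v')
termination_by s t => sizeOf s + sizeOf t
decreasing_by all_goals (simp; try omega)

/-- The function `h` of the Veblen term system. -/
def height : VT X → WithBot X
  | phi x _ => x
  | _ => ⊥

/-- Membership in `φ_{1+X}0`: in `phi x s` we require `h(s) ≤ x`, and sums consist of
weakly decreasing principal terms. -/
def VWF [LinearOrder X] : VT X → Prop
  | zero => True
  | phi x s => VWF s ∧ height s ≤ x
  | add u v =>
      (∃ y r, u = phi y r) ∧ VWF u ∧ VWF v ∧ v ≠ zero ∧ ¬ VLt u (lead v)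

/-- Addition of Veblen terms (ordinal notation sum). -/
noncomputable def vadd [LinearOrder X] : VT X → VT X → VT X
  | zero, t => t
  | s, zero => s
  | phi x s, t => if VLt (phi x s) (lead t) then t else add (phi x s) t
  | add u v, t => vadd u (vadd v t)

end VT

open AT VT

variable {X : Type*}

/-- `oAux acc t` computes `o` on a composition term `t` (with innermost factor first),
where `acc` is the value of `o` on the part already consumed; the paper's recursion is
`o(χ^{s_k}_{x_k} ∘ ⋯ ∘ χ^{s_0}_{x_0}(1)) = φ_{x_k}(o(χ^{s_{k-1}}_{x_{k-1}} ∘ ⋯)(1) + o(s_k))`,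
with `o(0) = φ_0 0` and `o(1) = φ_0(φ_0 0)`. -/
noncomputable def oAux [LinearOrder X] : VT X → AT X → VT X
  | acc, AT.zero => acc
  | acc, AT.one => acc
  | acc, AT.app x s t =>
      oAux (VT.phi (x : WithBot X)
        (vadd acc (if s = AT.zero then VT.phi ⊥ VT.zero
          else oAux (VT.phi ⊥ (VT.phi ⊥ VT.zero)) s))) t

/-- The embedding `o : Â(X) → φ_{1+X}0`. -/
noncomputable def o [LinearOrder X] (t : AT X) : VT X :=
  if t = AT.zero then VT.phi ⊥ VT.zero
  else oAux (VT.phi ⊥ (VT.phi ⊥ VT.zero)) t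

namespace VT
variable {X : Type*} [LinearOrder X]

@[simp] lemma vlt_zero_right (t : VT X) : ¬ VLt t zero := by
  cases t <;> simp [VLt]

@[simp] lemma vlt_zero_phi (b : WithBot X) (d : VT X) : VLt zero (phi b d) := by
  simp [VLt]

@[simp] lemma vlt_zero_add (u v : VT X) : VLt zero (add u v) := by
  simp [VLt]

lemma vlt_phi_phi {a b : WithBot X} {g d : VT X} :
    VLt (phi a g) (phi b d) ↔
      (a < b ∧ VLt g (phi b d)) ∨ (a = b ∧ VLt g d) ∨ (b < a ∧ VLt (phi a g) d) := by
  rw [VLt]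

lemma vlt_phi_add {a : WithBot X} {g u v : VT X} :
    VLt (phi a g) (add u v) ↔ VLt (phi a g) u ∨ phi a g = u := by
  rw [VLt]

lemma vlt_add_phi {b : WithBot X} {u v d : VT X} :
    VLt (add u v) (phi b d) ↔ VLt u (phi b d) := by
  rw [VLt]

lemma vlt_add_add {u v u' v' : VT X} :
    VLt (add u v) (add u' v') ↔ VLt u u' ∨ (u = u' ∧ VLt v v') := by
  rw [VLt]

lemma vlt_irrefl (a : VT X) : ¬ VLt a a := by
  induction a with
  | zero => simp
  | phi x s ih => rw [vlt_phi_phi]; simp [ih]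
  | add u v ihu ihv => rw [vlt_add_add]; simp [ihu, ihv]

end VT

namespace VT
variable {X : Type*} [LinearOrder X]

lemma vlt_add_right {w u v : VT X} (hu : ∃ y r, u = phi y r) (h : VLt w u) :
    VLt w (add u v) := by
  obtain ⟨y, r, rfl⟩ := hu
  cases w with
  | zero => simp
  | phi a g => rw [vlt_phi_add]; exact Or.inl h
  | add w1 w2 => rw [vlt_add_phi] at h; rw [vlt_add_add]; exact Or.inl h

mutual

theorem vlt_trans (a b c : VT X) (wa : VWF a) (wb : VWF b) (wc : VWF c)
    (h1 : VLt a b) (h2 : VLt b c) : VLt a c :=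
  match a, b, c, wa, wb, wc, h1, h2 with
  | _, b, zero, _, _, _, _, h2 => absurd h2 (vlt_zero_right b)
  | a, zero, _, _, _, _, h1, _ => absurd h1 (vlt_zero_right a)
  | zero, _, phi _ _, _, _, _, _, _ => by simp
  | zero, _, add _ _, _, _, _, _, _ => by simp
  | phi α u, phi β v, phi γ w, wa, wb, wc, h1, h2 => by
    have wu : VWF u := by simp only [VWF] at wa; exact wa.1
    have wv : VWF v := by simp only [VWF] at wb; exact wb.1
    have ww : VWF w := by simp only [VWF] at wc; exact wc.1
    have H1 := h1; have H2 := h2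
    rw [vlt_phi_phi] at h1 h2
    rcases h1 with ⟨hab, h1'⟩ | ⟨hab, h1'⟩ | ⟨hab, h1'⟩ <;>
      rcases h2 with ⟨hbc, h2'⟩ | ⟨hbc, h2'⟩ | ⟨hbc, h2'⟩
    · exact vlt_phi_phi.mpr (Or.inl ⟨lt_trans hab hbc,
        vlt_trans u (phi β v) (phi γ w) wu wb wc h1' H2⟩)
    · exact vlt_phi_phi.mpr (Or.inl ⟨hbc ▸ hab,
        vlt_trans u (phi β v) (phi γ w) wu wb wc h1' H2⟩)
    · rcases lt_trichotomy α γ with hag | hag | hag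
      · have huw := vlt_trans u (phi β v) w wu wb ww h1' h2'
        exact vlt_phi_phi.mpr (Or.inl ⟨hag, vlt_phi_right u w γ wu ww huw⟩)
      · exact vlt_phi_phi.mpr (Or.inr (Or.inl ⟨hag,
          vlt_trans u (phi β v) w wu wb ww h1' h2'⟩))
      · exact vlt_phi_phi.mpr (Or.inr (Or.inr ⟨hag,
          vlt_trans (phi α u) (phi β v) w wa wb ww H1 h2'⟩))
    · exact vlt_phi_phi.mpr (Or.inl ⟨hab ▸ hbc,
        vlt_trans u v (phi γ w) wu wv wc h1' h2'⟩)
    · exact vlt_phi_phi.mpr (Or.inr (Or.inl ⟨hab.trans hbc,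
        vlt_trans u v w wu wv ww h1' h2'⟩))
    · have hga : γ < α := by rw [hab]; exact hbc
      exact vlt_phi_phi.mpr (Or.inr (Or.inr ⟨hga,
        vlt_trans (phi α u) (phi β v) w wa wb ww H1 h2'⟩))
    · exact vlt_trans (phi α u) v (phi γ w) wa wv wc h1' h2'
    · have havw := vlt_trans (phi α u) v w wa wv ww h1' h2'
      have hga : γ < α := by rw [← hbc]; exact hab
      exact vlt_phi_phi.mpr (Or.inr (Or.inr ⟨hga, havw⟩))
    · exact vlt_phi_phi.mpr (Or.inr (Or.inr ⟨lt_trans hbc hab,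
        vlt_trans (phi α u) (phi β v) w wa wb ww H1 h2'⟩))
  | phi α u, phi β v, add u'' v'', wa, wb, wc, h1, h2 => by
    have wu'' : VWF u'' := by simp only [VWF] at wc; exact wc.2.1
    rw [vlt_phi_add] at h2
    rw [vlt_phi_add]
    rcases h2 with h2 | heq
    · exact Or.inl (vlt_trans (phi α u) (phi β v) u'' wa wb wu'' h1 h2)
    · exact Or.inl (by rw [← heq]; exact h1)
  | phi α u, add u' v', phi γ w, wa, wb, wc, h1, h2 => by
    have wu' : VWF u' := by simp only [VWF] at wb; exact wb.2.1
    rw [vlt_add_phi] at h2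
    rw [vlt_phi_add] at h1
    rcases h1 with h1 | heq
    · exact vlt_trans (phi α u) u' (phi γ w) wa wu' wc h1 h2
    · rw [heq]; exact h2
  | phi α u, add u' v', add u'' v'', wa, wb, wc, h1, h2 => by
    have wu' : VWF u' := by simp only [VWF] at wb; exact wb.2.1
    have wu'' : VWF u'' := by simp only [VWF] at wc; exact wc.2.1
    rw [vlt_phi_add] at h1
    rw [vlt_add_add] at h2
    rw [vlt_phi_add]
    rcases h1 with h1 | heq <;> rcases h2 with h2 | ⟨h2e, h2'⟩
    · exact Or.inl (vlt_trans (phi α u) u' u'' wa wu' wu'' h1 h2)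
    · exact Or.inl (h2e ▸ h1)
    · exact Or.inl (by rw [heq]; exact h2)
    · exact Or.inr (heq.trans h2e)
  | add u v₀, phi β v, phi γ w, wa, wb, wc, h1, h2 => by
    have wu : VWF u := by simp only [VWF] at wa; exact wa.2.1
    rw [vlt_add_phi] at h1
    rw [vlt_add_phi]
    exact vlt_trans u (phi β v) (phi γ w) wu wb wc h1 h2
  | add u v₀, phi β v, add u'' v'', wa, wb, wc, h1, h2 => by
    have wu : VWF u := by simp only [VWF] at wa; exact wa.2.1
    have wu'' : VWF u'' := by simp only [VWF] at wc; exact wc.2.1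
    rw [vlt_add_phi] at h1
    rw [vlt_phi_add] at h2
    rw [vlt_add_add]
    rcases h2 with h2 | heq
    · exact Or.inl (vlt_trans u (phi β v) u'' wu wb wu'' h1 h2)
    · exact Or.inl (by rw [← heq]; exact h1)
  | add u v₀, add u' v', phi γ w, wa, wb, wc, h1, h2 => by
    have wu : VWF u := by simp only [VWF] at wa; exact wa.2.1
    have wu' : VWF u' := by simp only [VWF] at wb; exact wb.2.1
    rw [vlt_add_add] at h1
    rw [vlt_add_phi] at h2
    rw [vlt_add_phi]
    rcases h1 with h1 | ⟨heq, _⟩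
    · exact vlt_trans u u' (phi γ w) wu wu' wc h1 h2
    · rw [heq]; exact h2
  | add u v₀, add u' v', add u'' v'', wa, wb, wc, h1, h2 => by
    have wu : VWF u := by simp only [VWF] at wa; exact wa.2.1
    have wv₀ : VWF v₀ := by simp only [VWF] at wa; exact wa.2.2.1
    have wu' : VWF u' := by simp only [VWF] at wb; exact wb.2.1
    have wv' : VWF v' := by simp only [VWF] at wb; exact wb.2.2.1
    have wu'' : VWF u'' := by simp only [VWF] at wc; exact wc.2.1
    have wv'' : VWF v'' := by simp only [VWF] at wc; exact wc.2.2.1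
    rw [vlt_add_add] at h1 h2 ⊢
    rcases h1 with h1 | ⟨he1, hv1⟩ <;> rcases h2 with h2 | ⟨he2, hv2⟩
    · exact Or.inl (vlt_trans u u' u'' wu wu' wu'' h1 h2)
    · exact Or.inl (he2 ▸ h1)
    · exact Or.inl (by rw [he1]; exact h2)
    · exact Or.inr ⟨he1.trans he2, vlt_trans v₀ v' v'' wv₀ wv' wv'' hv1 hv2⟩
  termination_by (Nat.max (sizeOf a) (sizeOf c), Nat.min (sizeOf a) (sizeOf c), sizeOf b)
  decreasing_by all_goals ((try simp only [Prod.lex_iff, Prod.mk.injEq, VT.phi.sizeOf_spec, VT.add.sizeOf_spec, VT.zero.sizeOf_spec, Nat.max_def, Nat.min_def, true_and, and_true, lt_self_iff_false, false_or, or_false, eq_self_iff_true]); (try split_ifs) <;> ((try simp only [true_and, and_true, lt_self_iff_false, false_or, or_false, eq_self_iff_true]) <;> omega))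

theorem vlt_phi_right (s d : VT X) (x : WithBot X) (ws : VWF s) (wd : VWF d)
    (h : VLt s d) : VLt s (phi x d) :=
  match s, d, ws, wd, h with
  | zero, d, _, _, _ => by simp
  | s, zero, _, _, h => absurd h (vlt_zero_right s)
  | add u v, phi b' d', ws, wd, h => by
    have wu : VWF u := by simp only [VWF] at ws; exact ws.2.1
    rw [vlt_add_phi] at h
    rw [vlt_add_phi]
    exact vlt_phi_right u (phi b' d') x wu wd h
  | add u v, add u' v', ws, wd, h => by
    have hup : ∃ y r, u = phi y r := by simp only [VWF] at ws; exact ws.1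
    have wu : VWF u := by simp only [VWF] at ws; exact ws.2.1
    rw [vlt_add_add] at h
    rw [vlt_add_phi]
    have hud : VLt u (add u' v') := by
      obtain ⟨y, r, rfl⟩ := hup
      rw [vlt_phi_add]
      rcases h with h | ⟨h, _⟩
      · exact Or.inl h
      · exact Or.inr h
    exact vlt_phi_right u (add u' v') x wu wd hud
  | phi c e, phi b' d', ws, wd, h => by
    have we : VWF e := by simp only [VWF] at ws; exact ws.1
    have hec : height e ≤ c := by simp only [VWF] at ws; exact ws.2
    have wd' : VWF d' := by simp only [VWF] at wd; exact wd.1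
    have hd'b : height d' ≤ b' := by simp only [VWF] at wd; exact wd.2
    have H := h
    rw [vlt_phi_phi] at h
    have hed : VLt e (phi b' d') := by
      rcases h with ⟨hcb, hed⟩ | ⟨hcb, hed'⟩ | ⟨hbc, hsd'⟩
      · exact hed
      · subst hcb; exact vlt_phi_right e d' c we wd' hed'
      · have hes : VLt e (phi c e) := vlt_arg e c we hec
        have hesd' : VLt e d' := vlt_trans e (phi c e) d' we ws wd' hes hsd'
        exact vlt_trans e d' (phi b' d') we wd' wd hesd' (vlt_arg d' b' wd' hd'b)
    rcases lt_trichotomy c x with hcx | hcx | hcx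
    · exact vlt_phi_phi.mpr (Or.inl ⟨hcx, vlt_phi_right e (phi b' d') x we wd hed⟩)
    · exact vlt_phi_phi.mpr (Or.inr (Or.inl ⟨hcx, hed⟩))
    · exact vlt_phi_phi.mpr (Or.inr (Or.inr ⟨hcx, H⟩))
  | phi c e, add u' v', ws, wd, h => by
    have we : VWF e := by simp only [VWF] at ws; exact ws.1
    have hec : height e ≤ c := by simp only [VWF] at ws; exact ws.2
    have hu'p : ∃ y r, u' = phi y r := by simp only [VWF] at wd; exact wd.1
    have wu' : VWF u' := by simp only [VWF] at wd; exact wd.2.1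
    have H := h
    rw [vlt_phi_add] at h
    have hes : VLt e (phi c e) := vlt_arg e c we hec
    have heu' : VLt e u' := by
      rcases h with h | heq
      · exact vlt_trans e (phi c e) u' we ws wu' hes h
      · rw [← heq]; exact hes
    have hed : VLt e (add u' v') := vlt_add_right hu'p heu'
    rcases lt_trichotomy c x with hcx | hcx | hcx
    · exact vlt_phi_phi.mpr (Or.inl ⟨hcx, vlt_phi_right e (add u' v') x we wd hed⟩)
    · exact vlt_phi_phi.mpr (Or.inr (Or.inl ⟨hcx, hed⟩))
    · exact vlt_phi_phi.mpr (Or.inr (Or.inr ⟨hcx, H⟩))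
  termination_by (Nat.max (sizeOf s) (sizeOf d), Nat.min (sizeOf s) (sizeOf d), 0)
  decreasing_by all_goals ((try simp only [Prod.lex_iff, Prod.mk.injEq, VT.phi.sizeOf_spec, VT.add.sizeOf_spec, VT.zero.sizeOf_spec, Nat.max_def, Nat.min_def, true_and, and_true, lt_self_iff_false, false_or, or_false, eq_self_iff_true]); (try split_ifs) <;> ((try simp only [true_and, and_true, lt_self_iff_false, false_or, or_false, eq_self_iff_true]) <;> omega))

theorem vlt_arg (s : VT X) (x : WithBot X) (ws : VWF s) (hh : height s ≤ x) :
    VLt s (phi x s) :=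
  match s, ws, hh with
  | zero, _, _ => by simp
  | add u v, ws, _ => by
    have wu : VWF u := by simp only [VWF] at ws; exact ws.2.1
    have hup : ∃ y r, u = phi y r := by simp only [VWF] at ws; exact ws.1
    have husv : VLt u (add u v) := by
      obtain ⟨y, r, rfl⟩ := hup
      rw [vlt_phi_add]; exact Or.inr rfl
    rw [vlt_add_phi]
    exact vlt_phi_right u (add u v) x wu ws husv
  | phi c e, ws, hh => by
    have we : VWF e := by simp only [VWF] at ws; exact ws.1
    have hec : height e ≤ c := by simp only [VWF] at ws; exact ws.2
    have hcx : (c : WithBot X) ≤ x := by simpa [height] using hh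
    have hes : VLt e (phi c e) := vlt_arg e c we hec
    rcases lt_or_eq_of_le hcx with hlt | heq
    · exact vlt_phi_phi.mpr (Or.inl ⟨hlt, vlt_phi_right e (phi c e) x we ws hes⟩)
    · exact vlt_phi_phi.mpr (Or.inr (Or.inl ⟨heq, hes⟩))
  termination_by (sizeOf s, sizeOf s, 0)
  decreasing_by all_goals ((try simp only [Prod.lex_iff, Prod.mk.injEq, VT.phi.sizeOf_spec, VT.add.sizeOf_spec, VT.zero.sizeOf_spec, Nat.max_def, Nat.min_def, true_and, and_true, lt_self_iff_false, false_or, or_false, eq_self_iff_true]); (try split_ifs) <;> ((try simp only [true_and, and_true, lt_self_iff_false, false_or, or_false, eq_self_iff_true]) <;> omega))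

end

end VT

namespace VT
variable {X : Type*} [LinearOrder X]

theorem vlt_trichot (a b : VT X) (wa : VWF a) (wb : VWF b) :
    VLt a b ∨ a = b ∨ VLt b a :=
  match a, b, wa, wb with
  | zero, zero, _, _ => Or.inr (Or.inl rfl)
  | zero, phi _ _, _, _ => Or.inl (by simp)
  | zero, add _ _, _, _ => Or.inl (by simp)
  | phi _ _, zero, _, _ => Or.inr (Or.inr (by simp))
  | add _ _, zero, _, _ => Or.inr (Or.inr (by simp))
  | phi α u, phi β v, wa, wb => by
    have wu : VWF u := by simp only [VWF] at wa; exact wa.1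
    have hu : height u ≤ α := by simp only [VWF] at wa; exact wa.2
    have wv : VWF v := by simp only [VWF] at wb; exact wb.1
    have hv : height v ≤ β := by simp only [VWF] at wb; exact wb.2
    rcases lt_trichotomy α β with h | h | h
    · rcases vlt_trichot u (phi β v) wu wb with hlt | heq | hgt
      · exact Or.inl (vlt_phi_phi.mpr (Or.inl ⟨h, hlt⟩))
      · exfalso; rw [heq] at hu; simp only [height] at hu
        exact absurd h (not_lt_of_ge hu)
      · exact Or.inr (Or.inr (vlt_phi_phi.mpr (Or.inr (Or.inr ⟨h, hgt⟩))))
    · subst h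
      rcases vlt_trichot u v wu wv with hlt | heq | hgt
      · exact Or.inl (vlt_phi_phi.mpr (Or.inr (Or.inl ⟨rfl, hlt⟩)))
      · exact Or.inr (Or.inl (by rw [heq]))
      · exact Or.inr (Or.inr (vlt_phi_phi.mpr (Or.inr (Or.inl ⟨rfl, hgt⟩))))
    · rcases vlt_trichot v (phi α u) wv wa with hlt | heq | hgt
      · exact Or.inr (Or.inr (vlt_phi_phi.mpr (Or.inl ⟨h, hlt⟩)))
      · exfalso; rw [heq] at hv; simp only [height] at hv
        exact absurd h (not_lt_of_ge hv)
      · exact Or.inl (vlt_phi_phi.mpr (Or.inr (Or.inr ⟨h, hgt⟩)))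
  | phi α u, add u' v', wa, wb => by
    have wu' : VWF u' := by simp only [VWF] at wb; exact wb.2.1
    rcases vlt_trichot (phi α u) u' wa wu' with hlt | heq | hgt
    · exact Or.inl (vlt_phi_add.mpr (Or.inl hlt))
    · exact Or.inl (vlt_phi_add.mpr (Or.inr heq))
    · exact Or.inr (Or.inr (vlt_add_phi.mpr hgt))
  | add u v, phi β d, wa, wb => by
    have wu : VWF u := by simp only [VWF] at wa; exact wa.2.1
    rcases vlt_trichot u (phi β d) wu wb with hlt | heq | hgt
    · exact Or.inl (vlt_add_phi.mpr hlt)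
    · exact Or.inr (Or.inr (vlt_phi_add.mpr (Or.inr heq.symm)))
    · exact Or.inr (Or.inr (vlt_phi_add.mpr (Or.inl hgt)))
  | add u v, add u' v', wa, wb => by
    have wu : VWF u := by simp only [VWF] at wa; exact wa.2.1
    have wv : VWF v := by simp only [VWF] at wa; exact wa.2.2.1
    have wu' : VWF u' := by simp only [VWF] at wb; exact wb.2.1
    have wv' : VWF v' := by simp only [VWF] at wb; exact wb.2.2.1
    rcases vlt_trichot u u' wu wu' with hlt | heq | hgt
    · exact Or.inl (vlt_add_add.mpr (Or.inl hlt))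
    · rcases vlt_trichot v v' wv wv' with hlt2 | heq2 | hgt2
      · exact Or.inl (vlt_add_add.mpr (Or.inr ⟨heq, hlt2⟩))
      · exact Or.inr (Or.inl (by rw [heq, heq2]))
      · exact Or.inr (Or.inr (vlt_add_add.mpr (Or.inr ⟨heq.symm, hgt2⟩)))
    · exact Or.inr (Or.inr (vlt_add_add.mpr (Or.inl hgt)))
  termination_by sizeOf a + sizeOf b
  decreasing_by all_goals (simp <;> omega)

lemma vlt_asymm {a b : VT X} (wa : VWF a) (wb : VWF b) (h : VLt a b) : ¬ VLt b a :=
  fun h' => vlt_irrefl a (vlt_trans a b a wa wb wa h h')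

@[simp] lemma lead_phi (y : WithBot X) (γ : VT X) : lead (phi y γ) = phi y γ := rfl
@[simp] lemma lead_add (u v : VT X) : lead (add u v) = u := rfl
@[simp] lemma lead_zero : (lead zero : VT X) = zero := rfl

lemma vwf_lead {v : VT X} (w : VWF v) : VWF (lead v) := by
  cases v with
  | zero => exact w
  | phi y γ => exact w
  | add u v => exact w.2.1

lemma vadd_zero_right (a : VT X) : vadd a zero = a := by
  cases a <;> rfl

@[simp] lemma vadd_zero_left (b : VT X) : vadd zero b = b := by
  cases b <;> rfl

lemma vadd_phi_def (y : WithBot X) (γ b : VT X) (hb : b ≠ zero) :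
    vadd (phi y γ) b = if VLt (phi y γ) (lead b) then b else add (phi y γ) b := by
  cases b with
  | zero => exact absurd rfl hb
  | phi _ _ => rfl
  | add _ _ => rfl

lemma vadd_add_left (u v b : VT X) (hb : b ≠ zero) :
    vadd (add u v) b = vadd u (vadd v b) := by
  cases b with
  | zero => exact absurd rfl hb
  | phi _ _ => rfl
  | add _ _ => rfl

lemma vlt_vadd (y : WithBot X) (γ b : VT X) (hb : b ≠ zero) :
    VLt (phi y γ) (vadd (phi y γ) b) := by
  rw [vadd_phi_def _ _ _ hb]
  split_ifs with h
  · cases b with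
    | zero => exact absurd rfl hb
    | phi _ _ => exact h
    | add u v => exact vlt_phi_add.mpr (Or.inl h)
  · exact vlt_phi_add.mpr (Or.inr rfl)

lemma vadd_eq_add {y : WithBot X} {γ b : VT X} (hb : ∃ z δ, b = phi z δ)
    (hn : ¬ VLt (phi y γ) b) : vadd (phi y γ) b = add (phi y γ) b := by
  obtain ⟨z, δ, rfl⟩ := hb
  rw [vadd_phi_def _ _ _ (by simp), if_neg]
  simpa using hn

lemma vlt_of_lead_lt {v : VT X} {x : WithBot X} {δ : VT X}
    (h : VLt (lead v) (phi x δ)) : VLt v (phi x δ) := by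
  cases v with
  | zero => simp
  | phi _ _ => exact h
  | add u w => exact vlt_add_phi.mpr h

lemma vadd_lt_phi (a b : VT X) {x : WithBot X} {δ : VT X} (wa : VWF a)
    (wc : VWF (phi x δ)) (ha : VLt a (phi x δ)) (hb : VLt b (phi x δ)) :
    VLt (vadd a b) (phi x δ) :=
  match a, wa, ha with
  | zero, _, _ => by simpa using hb
  | phi y γ, _, ha => by
    cases b with
    | zero => rw [vadd_zero_right]; exact ha
    | phi z δ' =>
      rw [vadd_phi_def _ _ _ (by simp)]
      split_ifs with h
      · exact hb
      · exact vlt_add_phi.mpr ha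
    | add p q =>
      rw [vadd_phi_def _ _ _ (by simp)]
      split_ifs with h
      · exact hb
      · exact vlt_add_phi.mpr ha
  | add u v, wa, ha => by
    have wu : VWF u := wa.2.1
    have wv : VWF v := wa.2.2.1
    have hnl : ¬ VLt u (lead v) := wa.2.2.2.2
    have hu : VLt u (phi x δ) := vlt_add_phi.mp ha
    have hvc : VLt v (phi x δ) := by
      rcases vlt_trichot (lead v) u (vwf_lead wv) wu with hlt | heq | hgt
      · exact vlt_of_lead_lt (vlt_trans (lead v) u (phi x δ) (vwf_lead wv) wu wc hlt hu)
      · exact vlt_of_lead_lt (heq ▸ hu)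
      · exact absurd hgt hnl
    cases b with
    | zero => rw [vadd_zero_right]; exact ha
    | phi z δ' =>
      rw [vadd_add_left _ _ _ (by simp)]
      exact vadd_lt_phi u (vadd v (phi z δ')) wu wc hu
        (vadd_lt_phi v (phi z δ') wv wc hvc hb)
    | add p q =>
      rw [vadd_add_left _ _ _ (by simp)]
      exact vadd_lt_phi u (vadd v (add p q)) wu wc hu
        (vadd_lt_phi v (add p q) wv wc hvc hb)
  termination_by sizeOf a
  decreasing_by all_goals (simp <;> omega)

end VT

section Machinery
variable [LinearOrder X]

/-- invariants needed along `oAux`. -/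
def Good : VT X → AT X → Prop
  | _, AT.zero => True
  | _, AT.one => True
  | acc, AT.app x s r =>
      AWF s ∧ VWF (o s) ∧ VLt (o s) acc ∧
        Good (VT.phi (x : WithBot X) (vadd acc (o s))) r

def idxB : AT X → WithBot X → Prop
  | AT.app z _ r, y => (z : WithBot X) < y ∧ idxB r y
  | _, _ => True

def decIdx : AT X → Prop
  | AT.app x _ r => idxB r (x : WithBot X) ∧ decIdx r
  | _ => True

lemma idxB_mono {r : AT X} {a b : WithBot X} (h : idxB r a) (hab : a ≤ b) :
    idxB r b := by
  induction r with
  | zero => trivial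
  | one => trivial
  | app z u r ih1 ih2 =>
    obtain ⟨h1, h2⟩ := h
    exact ⟨lt_of_lt_of_le h1 hab, ih2 h2⟩

@[simp] lemma oAux_zero (acc : VT X) : oAux acc AT.zero = acc := rfl
@[simp] lemma oAux_one (acc : VT X) : oAux acc AT.one = acc := rfl

lemma oAux_app (acc : VT X) (x : X) (s r : AT X) :
    oAux acc (AT.app x s r) = oAux (VT.phi (x : WithBot X) (vadd acc (o s))) r := rfl

@[simp] lemma o_zero : o (AT.zero : AT X) = VT.phi ⊥ VT.zero := if_pos rfl

lemma o_ne_zero {t : AT X} (h : t ≠ AT.zero) :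
    o t = oAux (VT.phi ⊥ (VT.phi ⊥ VT.zero)) t := if_neg h

lemma oAux_isPhi (t : AT X) : ∀ acc : VT X, (∃ y γ, acc = VT.phi y γ) →
    ∃ y γ, oAux acc t = VT.phi y γ := by
  induction t with
  | zero => exact fun acc h => h
  | one => exact fun acc h => h
  | app x s r ih1 ih2 => exact fun acc _ => ih2 _ ⟨_, _, rfl⟩

lemma o_isPhi (t : AT X) : ∃ y γ, o t = VT.phi y γ := by
  by_cases h : t = AT.zero
  · subst h; exact ⟨⊥, VT.zero, by simp⟩
  · rw [o_ne_zero h]; exact oAux_isPhi t _ ⟨_, _, rfl⟩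

lemma o_ne_zeroV (t : AT X) : o t ≠ VT.zero := by
  obtain ⟨y, γ, h⟩ := o_isPhi t; rw [h]; simp

lemma base_wf : VWF (VT.phi (⊥ : WithBot X) (VT.phi ⊥ VT.zero)) := by
  simp [VWF, height]

lemma phibot_wf : VWF (VT.phi (⊥ : WithBot X) VT.zero) := by
  simp [VWF, height]

lemma good_step {acc : VT X} {x : X} {s : AT X} (hy : ∃ y γ, acc = VT.phi y γ)
    (wacc : VWF acc) (wos : VWF (o s)) (hlt : VLt (o s) acc) :
    VWF (VT.phi (x : WithBot X) (vadd acc (o s))) ∧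
      VLt acc (VT.phi (x : WithBot X) (vadd acc (o s))) := by
  obtain ⟨y, γ, rfl⟩ := hy
  obtain ⟨z, δ, hz⟩ := o_isPhi s
  have hnz : o s ≠ VT.zero := o_ne_zeroV s
  have hasym : ¬ VLt (VT.phi y γ) (o s) := vlt_asymm wos (by exact wacc) hlt
  have heq : vadd (VT.phi y γ) (o s) = VT.add (VT.phi y γ) (o s) :=
    vadd_eq_add ⟨z, δ, hz⟩ hasym
  have wadd : VWF (VT.add (VT.phi y γ) (o s)) := by
    refine ⟨⟨y, γ, rfl⟩, wacc, wos, hnz, ?_⟩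
    rw [hz]; simpa [hz] using hasym
  have wphi : VWF (VT.phi (x : WithBot X) (vadd (VT.phi y γ) (o s))) := by
    rw [heq]; exact ⟨wadd, by simp [height]⟩
  refine ⟨wphi, ?_⟩
  have h1 : VLt (VT.phi y γ) (vadd (VT.phi y γ) (o s)) := vlt_vadd y γ _ hnz
  exact vlt_phi_right _ _ _ wacc (by rw [heq]; exact wadd) h1

lemma oAux_wf : ∀ (t : AT X) (acc : VT X), VWF acc → (∃ y γ, acc = VT.phi y γ) →
    Good acc t → VWF (oAux acc t) := by
  intro t
  induction t with
  | zero => exact fun acc w _ _ => w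
  | one => exact fun acc w _ _ => w
  | app x s r ih1 ih2 =>
    intro acc w hy g
    obtain ⟨hAWF, wos, hlt, g'⟩ := g
    rw [oAux_app]
    exact ih2 _ (good_step hy w wos hlt).1 ⟨_, _, rfl⟩ g'

lemma oAux_le : ∀ (t : AT X) (acc : VT X), VWF acc → (∃ y γ, acc = VT.phi y γ) →
    Good acc t → oAux acc t = acc ∨ VLt acc (oAux acc t) := by
  intro t
  induction t with
  | zero => exact fun acc _ _ _ => Or.inl rfl
  | one => exact fun acc _ _ _ => Or.inl rfl
  | app x s r ih1 ih2 =>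
    intro acc w hy g
    obtain ⟨hAWF, wos, hlt, g'⟩ := g
    obtain ⟨wphi, hles⟩ := good_step (x := x) hy w wos hlt
    rw [oAux_app]
    rcases ih2 _ wphi ⟨_, _, rfl⟩ g' with heq | hlt2
    · rw [heq]; exact Or.inr hles
    · exact Or.inr (vlt_trans acc _ _ w wphi
        (oAux_wf r _ wphi ⟨_, _, rfl⟩ g') hles hlt2)

lemma oAux_gt_app (acc : VT X) (x : X) (s r : AT X) (w : VWF acc)
    (hy : ∃ y γ, acc = VT.phi y γ) (g : Good acc (AT.app x s r)) :
    VLt acc (oAux acc (AT.app x s r)) := by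
  obtain ⟨hAWF, wos, hlt, g'⟩ := g
  obtain ⟨wphi, hles⟩ := good_step (x := x) hy w wos hlt
  rw [oAux_app]
  rcases oAux_le r _ wphi ⟨_, _, rfl⟩ g' with heq | hlt2
  · rw [heq]; exact hles
  · exact vlt_trans acc _ _ w wphi (oAux_wf r _ wphi ⟨_, _, rfl⟩ g') hles hlt2

lemma oAux_dom : ∀ (r : AT X) (acc1 : VT X) {x2 : WithBot X} {δ2 : VT X},
    VWF acc1 → (∃ y γ, acc1 = VT.phi y γ) → Good acc1 r → idxB r x2 →
    VWF (VT.phi x2 δ2) → VLt acc1 (VT.phi x2 δ2) →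
    VLt (oAux acc1 r) (VT.phi x2 δ2) := by
  intro r
  induction r with
  | zero => intro acc1 x2 d2 w hy g hi wc hlt; exact hlt
  | one => intro acc1 x2 d2 w hy g hi wc hlt; exact hlt
  | app z u r ih1 ih2 =>
    intro acc1 x2 d2 wacc hy g hi wc hlt
    obtain ⟨hAWF, wos, hos, g'⟩ := g
    obtain ⟨hz, hi'⟩ := hi
    obtain ⟨wphi, _⟩ := good_step (x := z) hy wacc wos hos
    rw [oAux_app]
    have howc : VLt (o u) (VT.phi x2 d2) := vlt_trans (o u) acc1 _ wos wacc wc hos hlt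
    have hnew : VLt (VT.phi (z : WithBot X) (vadd acc1 (o u))) (VT.phi x2 d2) :=
      vlt_phi_phi.mpr (Or.inl ⟨hz, vadd_lt_phi acc1 (o u) wacc wc hlt howc⟩)
    exact ih2 _ wphi ⟨_, _, rfl⟩ g' hi' wc hnew

end Machinery

section ATside
variable [LinearOrder X]

def isCh : AT X → Prop
  | AT.one => True
  | AT.app _ _ r => isCh r
  | AT.zero => False

def lastO : Option X → AT X → Option X
  | l, AT.one => l
  | l, AT.zero => l
  | _, AT.app y _ r => lastO (some y) r

def extC : AT X → AT X → AT X
  | acc, AT.one => acc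
  | _, AT.zero => AT.zero
  | acc, AT.app y u r => extC (acomp acc y u) r

lemma isCh_ne_zero {t : AT X} (h : isCh t) : t ≠ AT.zero := by
  cases t with
  | zero => exact absurd h (by simp [isCh])
  | one => simp
  | app _ _ _ => simp

lemma isCh_acomp {t : AT X} (h : isCh t) (x : X) (s : AT X) :
    isCh (acomp t x s) := by
  induction t with
  | zero => exact absurd h (by simp [isCh])
  | one => trivial
  | app y u r ih1 ih2 => exact ih2 h

lemma acomp_ne_zero {t : AT X} (h : isCh t) (x : X) (s : AT X) :
    acomp t x s ≠ AT.zero := isCh_ne_zero (isCh_acomp h x s)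

lemma sizeOf_acomp {t : AT X} (h : isCh t) (x : X) (s : AT X) :
    sizeOf (acomp t x s) = sizeOf t + 1 + sizeOf x + sizeOf s := by
  induction t with
  | zero => exact absurd h (by simp [isCh])
  | one => simp [acomp]; omega
  | app y u r ih1 ih2 =>
    show sizeOf (AT.app y u (acomp r x s)) = _
    simp only [AT.app.sizeOf_spec, ih2 h]
    omega

lemma lastO_acomp {t : AT X} (h : isCh t) (x : X) (s : AT X) :
    ∀ l, lastO l (acomp t x s) = some x := by
  induction t with
  | zero => exact absurd h (by simp [isCh])
  | one => intro l; rfl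
  | app y u r ih1 ih2 => intro l; exact ih2 h (some y)

lemma extC_acomp : ∀ (t acc : AT X) (x : X) (s : AT X),
    extC acc (acomp t x s) = acomp (extC acc t) x s := by
  intro t
  induction t with
  | zero => intro acc x s; rfl
  | one => intro acc x s; rfl
  | app y u r ih1 ih2 => intro acc x s; exact ih2 (acomp acc y u) x s

lemma awf_dec : ∀ (t : AT X) (l : Option X) (acc : AT X), AWFaux l acc t →
    decIdx t ∧ isCh t ∧ ∀ y : X, l = some y → idxB t (y : WithBot X) := by
  intro t
  induction t with
  | zero => intro l acc h; simp [AWFaux] at h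
  | one => exact fun l acc _ => ⟨trivial, trivial, fun y _ => trivial⟩
  | app x s r ih1 ih2 =>
    intro l acc h
    simp only [AWFaux] at h
    obtain ⟨hlt, hs, hALt, hrec⟩ := h
    obtain ⟨dr, cr, fr⟩ := ih2 (some x) (acomp acc x s) hrec
    refine ⟨⟨fr x rfl, dr⟩, cr, fun y hl => ?_⟩
    have hxy : x < y := hlt y hl
    exact ⟨WithBot.coe_lt_coe.mpr hxy,
      idxB_mono (fr x rfl) (le_of_lt (WithBot.coe_lt_coe.mpr hxy))⟩

lemma awfaux_acomp : ∀ (t : AT X) (l : Option X) (acc : AT X) (x : X) (s : AT X),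
    AWFaux l acc t → (∀ y, lastO l t = some y → x < y) →
    (s = AT.zero ∨ AWFaux none AT.one s) → ALt s (extC acc t) →
    AWFaux l acc (acomp t x s) := by
  intro t
  induction t with
  | zero => intro l acc x s h _ _ _; simp [AWFaux] at h
  | one =>
    intro l acc x s _ hx hs hALt
    exact ⟨hx, hs, hALt, trivial⟩
  | app y u r ih1 ih2 =>
    intro l acc x s h hx hs hALt
    simp only [AWFaux] at h ⊢
    obtain ⟨h1, h2, h3, h4⟩ := h
    exact ⟨h1, h2, h3, ih2 (some y) (acomp acc y u) x s h4 hx hs hALt⟩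

lemma o_eq_oAux {t : AT X} (h : t ≠ AT.zero) :
    o t = oAux (VT.phi ⊥ (VT.phi ⊥ VT.zero)) t := o_ne_zero h

lemma oAux_acomp : ∀ (t : AT X) (acc : VT X) (x : X) (s : AT X), isCh t →
    oAux acc (acomp t x s) = VT.phi (x : WithBot X) (vadd (oAux acc t) (o s)) := by
  intro t
  induction t with
  | zero => intro acc x s h; exact absurd h (by simp [isCh])
  | one =>
    intro acc x s _
    show oAux acc (AT.app x s AT.one) = _
    rw [oAux_app, oAux_one, oAux_one]
  | app y u r ih1 ih2 =>
    intro acc x s h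
    show oAux acc (AT.app y u (acomp r x s)) = _
    rw [oAux_app, ih2 _ _ _ h, oAux_app]

lemma o_acomp {accA : AT X} (h : isCh accA) (x : X) (s : AT X) :
    o (acomp accA x s) = VT.phi (x : WithBot X) (vadd (o accA) (o s)) := by
  rw [o_eq_oAux (acomp_ne_zero h x s), oAux_acomp _ _ _ _ h,
    ← o_eq_oAux (isCh_ne_zero h)]

end ATside

section Final
variable [LinearOrder X]

lemma sizeOf_posAT (t : AT X) : 1 ≤ sizeOf t := by
  cases t <;> simp <;> omega

lemma vadd_lt_vadd_right {acc w1 w2 : VT X} (hy : ∃ y γ, acc = VT.phi y γ)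
    (wacc : VWF acc) (ww1 : VWF w1) (ww2 : VWF w2)
    (hp1 : ∃ y γ, w1 = VT.phi y γ) (hp2 : ∃ y γ, w2 = VT.phi y γ)
    (h1 : VLt w1 acc) (h2 : VLt w2 acc) (h : VLt w1 w2) :
    VLt (vadd acc w1) (vadd acc w2) := by
  obtain ⟨y, γ, rfl⟩ := hy
  rw [vadd_eq_add hp1 (vlt_asymm ww1 wacc h1),
    vadd_eq_add hp2 (vlt_asymm ww2 wacc h2)]
  exact vlt_add_add.mpr (Or.inr ⟨rfl, h⟩)

lemma o_one_eq : o (AT.one : AT X) = VT.phi ⊥ (VT.phi ⊥ VT.zero) := by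
  rw [o_ne_zero (by simp)]; rfl

lemma bridge (n : ℕ)
    (Hw : ∀ s : AT X, sizeOf s ≤ n → AWF s → VWF (o s))
    (Hb : ∀ s u : AT X, sizeOf s + sizeOf u ≤ n → AWF s → AWF u → ALt s u →
      VLt (o s) (o u)) :
    ∀ (t accA : AT X) (l : Option X), sizeOf accA + sizeOf t ≤ n + 2 →
      AWFaux l accA t → AWFaux none AT.one accA → isCh accA →
      extC AT.one accA = accA → lastO none accA = l →
      Good (o accA) t := by
  intro t
  induction t with
  | zero => intro accA l _ h _ _ _ _; simp [AWFaux] at h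
  | one => intro accA l _ _ _ _ _ _; trivial
  | app x s r ih1 ih2 =>
    intro accA l hsz h hA hch hext hlast
    simp only [AWFaux] at h
    obtain ⟨hlt, hs, hALt, hrec⟩ := h
    have hAWFs : AWF s := hs
    have hAWFaccA : AWF accA := Or.inr hA
    have hr1 : 1 ≤ sizeOf r := sizeOf_posAT r
    have hacc1 : 1 ≤ sizeOf accA := sizeOf_posAT accA
    have hszapp : sizeOf (AT.app x s r) = 1 + sizeOf x + sizeOf s + sizeOf r := by
      simp
    have h1 : sizeOf s ≤ n := by omega
    have h2 : sizeOf s + sizeOf accA ≤ n := by omega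
    have wos : VWF (o s) := Hw s h1 hAWFs
    have hos : VLt (o s) (o accA) := Hb s accA (by omega) hAWFs hAWFaccA hALt
    refine ⟨hAWFs, wos, hos, ?_⟩
    rw [← o_acomp hch x s]
    apply ih2 (acomp accA x s) (some x)
    · rw [sizeOf_acomp hch]; omega
    · exact hrec
    · apply awfaux_acomp accA none AT.one x s hA
      · intro y hy; rw [hlast] at hy; exact hlt y hy
      · exact hs
      · rw [hext]; exact hALt
    · exact isCh_acomp hch x s
    · rw [extC_acomp, hext]
    · exact lastO_acomp hch x s none

lemma monoAux (n : ℕ)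
    (Hb : ∀ s u : AT X, sizeOf s + sizeOf u < n → AWF s → AWF u → ALt s u →
      VLt (o s) (o u)) :
    ∀ (t1 t2 : AT X) (acc : VT X), sizeOf t1 + sizeOf t2 ≤ n →
      VWF acc → (∃ y γ, acc = VT.phi y γ) →
      Good acc t1 → Good acc t2 → decIdx t1 → decIdx t2 →
      isCh t1 → isCh t2 → ALt t1 t2 →
      VLt (oAux acc t1) (oAux acc t2) := by
  intro t1
  induction t1 with
  | zero =>
    intro t2 acc _ _ _ _ _ _ _ ch1 _ _
    exact absurd ch1 (by simp [isCh])
  | one =>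
    intro t2 acc hsz wacc hy g1 g2 d1 d2 ch1 ch2 hlt
    cases t2 with
    | zero => simp [ALt] at hlt
    | one => simp [ALt] at hlt
    | app y u r2 =>
      rw [oAux_one]
      exact oAux_gt_app acc y u r2 wacc hy g2
  | app x s r1 ihs ihr =>
    intro t2 acc hsz wacc hy g1 g2 d1 d2 ch1 ch2 hlt
    cases t2 with
    | zero => simp [ALt] at hlt
    | one => simp [ALt] at hlt
    | app y u r2 =>
      obtain ⟨hAs, wos, hosacc, g1'⟩ := g1
      obtain ⟨hAu, wou, houacc, g2'⟩ := g2
      obtain ⟨hi1, d1'⟩ := d1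
      obtain ⟨hi2, d2'⟩ := d2
      obtain ⟨w1, hacclt1⟩ := good_step (x := x) hy wacc wos hosacc
      obtain ⟨w2, hacclt2⟩ := good_step (x := y) hy wacc wou houacc
      have w1' := oAux_wf r1 _ w1 ⟨_, _, rfl⟩ g1'
      have w2' := oAux_wf r2 _ w2 ⟨_, _, rfl⟩ g2'
      rw [oAux_app, oAux_app]
      simp only [ALt] at hlt
      have finish : VLt (VT.phi (x : WithBot X) (vadd acc (o s)))
            (VT.phi (y : WithBot X) (vadd acc (o u))) →
          idxB r1 (y : WithBot X) →
          VLt (oAux (VT.phi (x : WithBot X) (vadd acc (o s))) r1)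
            (oAux (VT.phi (y : WithBot X) (vadd acc (o u))) r2) := by
        intro h12 hib
        have hdom := oAux_dom r1 _ w1 ⟨_, _, rfl⟩ g1' hib w2 h12
        rcases oAux_le r2 _ w2 ⟨_, _, rfl⟩ g2' with he | hl
        · rw [he]; exact hdom
        · exact vlt_trans _ _ _ w1' w2 w2' hdom hl
      rcases hlt with hxy | ⟨hxy, hsu⟩ | ⟨hxy, hsu, hrr⟩
      · -- x < y
        have hxy' : (x : WithBot X) < (y : WithBot X) := WithBot.coe_lt_coe.mpr hxy
        have hos2 : VLt (o s) (VT.phi (y : WithBot X) (vadd acc (o u))) :=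
          vlt_trans _ acc _ wos wacc w2 hosacc hacclt2
        have h12 : VLt (VT.phi (x : WithBot X) (vadd acc (o s)))
            (VT.phi (y : WithBot X) (vadd acc (o u))) :=
          vlt_phi_phi.mpr (Or.inl ⟨hxy', vadd_lt_phi acc (o s) wacc w2 hacclt2 hos2⟩)
        exact finish h12 (idxB_mono hi1 (le_of_lt hxy'))
      · -- x = y, s < u
        subst hxy
        have hr1p : 1 ≤ sizeOf r1 := sizeOf_posAT r1
        have hr2p : 1 ≤ sizeOf r2 := sizeOf_posAT r2
        have hsz1 : sizeOf (AT.app x s r1) = 1 + sizeOf x + sizeOf s + sizeOf r1 := by simp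
        have hsz2 : sizeOf (AT.app x u r2) = 1 + sizeOf x + sizeOf u + sizeOf r2 := by simp
        have hosu : VLt (o s) (o u) := Hb s u (by omega) hAs hAu hsu
        have hVV : VLt (vadd acc (o s)) (vadd acc (o u)) :=
          vadd_lt_vadd_right hy wacc wos wou (o_isPhi s) (o_isPhi u) hosacc houacc hosu
        have h12 : VLt (VT.phi (x : WithBot X) (vadd acc (o s)))
            (VT.phi (x : WithBot X) (vadd acc (o u))) :=
          vlt_phi_phi.mpr (Or.inr (Or.inl ⟨rfl, hVV⟩))
        exact finish h12 hi1
      · -- x = y, s = u, r1 < r2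
        subst hxy; subst hsu
        have hsz1 : sizeOf (AT.app x s r1) = 1 + sizeOf x + sizeOf s + sizeOf r1 := by simp
        have hsz2 : sizeOf (AT.app x s r2) = 1 + sizeOf x + sizeOf s + sizeOf r2 := by simp
        exact ihr r2 _ (by omega) w1 ⟨_, _, rfl⟩ g1' g2' d1' d2' ch1 ch2 hrr
end Final

/-- The map `o` is a strictly increasing map from `Â(X)` into `φ_{1+X}0`. -/
theorem ackermann_into_veblen (X : Type*) [LinearOrder X] :
    (∀ s : AT X, AWF s → VWF (o s)) ∧
    (∀ s t : AT X, AWF s → AWF t → ALt s t → VLt (o s) (o t)) := by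
  have main : ∀ n : ℕ, (∀ t : AT X, sizeOf t ≤ n → AWF t → VWF (o t)) ∧
      (∀ s t : AT X, sizeOf s + sizeOf t ≤ n → AWF s → AWF t → ALt s t →
        VLt (o s) (o t)) := by
    intro n
    induction n using Nat.strong_induction_on with
    | _ n ih =>
    have Hw : ∀ s : AT X, sizeOf s ≤ n - 1 → AWF s → VWF (o s) := by
      intro s h hA
      rcases Nat.eq_zero_or_pos n with rfl | hn
      · exact absurd (le_trans (sizeOf_posAT s) h) (by omega)
      · exact (ih (n - 1) (by omega)).1 s h hA
    have Hb : ∀ s u : AT X, sizeOf s + sizeOf u ≤ n - 1 → AWF s → AWF u →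
        ALt s u → VLt (o s) (o u) := by
      intro s u h hA1 hA2 hl
      rcases Nat.eq_zero_or_pos n with rfl | hn
      · exact absurd (le_trans (by have := sizeOf_posAT s; have := sizeOf_posAT u; omega : (2:ℕ) ≤ sizeOf s + sizeOf u) h) (by omega)
      · exact (ih (n - 1) (by omega)).2 s u h hA1 hA2 hl
    constructor
    · intro t hsz hA
      rcases hA with rfl | hA
      · rw [o_zero]; exact phibot_wf
      · have hch := (awf_dec t none AT.one hA).2.1
        rw [o_ne_zero (isCh_ne_zero hch)]
        apply oAux_wf t _ base_wf ⟨_, _, rfl⟩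
        have := bridge (n - 1) Hw Hb t AT.one none
          (by have := sizeOf_posAT t; simp; omega) hA trivial trivial rfl rfl
        rwa [o_one_eq] at this
    · intro s t hsz hAs hAt hlt
      rcases hAt with rfl | hAt
      · simp [ALt] at hlt
      · have hcht := (awf_dec t none AT.one hAt).2.1
        have gt : Good (VT.phi ⊥ (VT.phi ⊥ VT.zero)) t := by
          have := bridge (n - 1) Hw Hb t AT.one none
            (by have := sizeOf_posAT t; have := sizeOf_posAT s; simp; omega)
            hAt trivial trivial rfl rfl
          rwa [o_one_eq] at this
        rcases hAs with rfl | hAs2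
        · rw [o_zero, o_ne_zero (isCh_ne_zero hcht)]
          have hb : VLt (VT.phi (⊥ : WithBot X) VT.zero)
              (VT.phi ⊥ (VT.phi ⊥ VT.zero)) :=
            vlt_phi_phi.mpr (Or.inr (Or.inl ⟨rfl, by simp⟩))
          rcases oAux_le t _ base_wf ⟨_, _, rfl⟩ gt with he | hl
          · rw [he]; exact hb
          · exact vlt_trans _ _ _ phibot_wf base_wf
              (oAux_wf t _ base_wf ⟨_, _, rfl⟩ gt) hb hl
        · have hchs := (awf_dec s none AT.one hAs2).2.1
          have gs : Good (VT.phi ⊥ (VT.phi ⊥ VT.zero)) s := by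
            have := bridge (n - 1) Hw Hb s AT.one none
              (by have := sizeOf_posAT t; have := sizeOf_posAT s; simp; omega)
              hAs2 trivial trivial rfl rfl
            rwa [o_one_eq] at this
          rw [o_ne_zero (isCh_ne_zero hchs), o_ne_zero (isCh_ne_zero hcht)]
          exact monoAux n
            (fun p q hpq hA1 hA2 hl => Hb p q (by omega) hA1 hA2 hl)
            s t _ hsz base_wf ⟨_, _, rfl⟩ gs gt
            (awf_dec s none AT.one hAs2).1 (awf_dec t none AT.one hAt).1
            hchs hcht hlt
  exact ⟨fun s hA => (main (sizeOf s)).1 s le_rfl hA,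
    fun s t hAs hAt h => (main (sizeOf s + sizeOf t)).2 s t le_rfl hAs hAt h⟩
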